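/- For every n ≥ 2, the number of permutations π in S_n such that π avoids both the pattern 213 and the pattern 312 and π² avoids the consecutive pattern 213 equals 2^{n−2} + n − 1. -/

import Mathlib

/-!
Avoiding both 213 and 312 means having no valley, i.e. being unimodal: increasing up to the
maximum and decreasing after it. Such a permutation is determined by the set `D` of values to the
right of its maximum (any `D` omitting the maximum occurs): it lists the other values increasingly,
then `D` decreasingly. In `π²` an occurrence of the consecutive pattern 213 must be centred at the
position of the maximum, and one exists exactly when the second largest value lies left of the
maximum and at least two values lie right of it. The sets `D` avoiding this, those containing the
second largest value or with `|D| ≤ 1`, number `2^(n-2) + (n - 1)`.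
-/

/-- `π` contains the (classical) pattern `σ`: there is a strictly increasing
sequence of positions on which `π` is order isomorphic to `σ`. -/
def ContainsPat {n k : ℕ} (π : Equiv.Perm (Fin n)) (σ : Equiv.Perm (Fin k)) : Prop :=
  ∃ f : Fin k → Fin n, StrictMono f ∧ ∀ a b : Fin k, σ a < σ b ↔ π (f a) < π (f b)

/-- `π` avoids the pattern `σ`. -/
def AvoidsPat {n k : ℕ} (π : Equiv.Perm (Fin n)) (σ : Equiv.Perm (Fin k)) : Prop :=
  ¬ ContainsPat π σ

/-- `π` contains the consecutive pattern `σ`: some `k` consecutive positions of `π`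
carry values order isomorphic to `σ`. -/
def ContainsConsecPat {n k : ℕ} (π : Equiv.Perm (Fin n)) (σ : Equiv.Perm (Fin k)) : Prop :=
  ∃ (i : ℕ) (h : i + k ≤ n), ∀ a b : Fin k,
    σ a < σ b ↔ π ⟨i + a.val, by have := a.isLt; omega⟩ < π ⟨i + b.val, by have := b.isLt; omega⟩

/-- `π` avoids the consecutive pattern `σ`. -/
def AvoidsConsecPat {n k : ℕ} (π : Equiv.Perm (Fin n)) (σ : Equiv.Perm (Fin k)) : Prop :=
  ¬ ContainsConsecPat π σ

/-- the pattern 231 (0-indexed: 0 ↦ 1, 1 ↦ 2, 2 ↦ 0) -/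
def p231 : Equiv.Perm (Fin 3) := c[0, 1, 2]

/-- the pattern 312 (0-indexed: 0 ↦ 2, 1 ↦ 0, 2 ↦ 1) -/
def p312 : Equiv.Perm (Fin 3) := c[0, 2, 1]

/-- the pattern 213 (0-indexed: 0 ↦ 1, 1 ↦ 0, 2 ↦ 2) -/
def p213 : Equiv.Perm (Fin 3) := c[0, 1]

/-- the pattern 1432 (0-indexed: 0 ↦ 0, 1 ↦ 3, 2 ↦ 2, 3 ↦ 1) -/
def p1432 : Equiv.Perm (Fin 4) := c[1, 3]

/-- direct sum of two permutations -/
def dsum {k m : ℕ} (σ : Equiv.Perm (Fin k)) (τ : Equiv.Perm (Fin m)) :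
    Equiv.Perm (Fin (k + m)) :=
  finSumFinEquiv.symm.trans ((Equiv.sumCongr σ τ).trans finSumFinEquiv)

/-- the Lucas numbers: L₁ = 1, L₂ = 3, L_m = L_{m-1} + L_{m-2} -/
def lucas : ℕ → ℕ
  | 0 => 2
  | 1 => 1
  | n + 2 => lucas (n + 1) + lucas n

open Finset Function

section Patterns

variable {n k : ℕ}

lemma lt_iff_lt_iff_strictMono_comp_symm {α : Type*} [LinearOrder α] (σ : Equiv.Perm (Fin k))
    (g : Fin k → α) : (∀ a b, σ a < σ b ↔ g a < g b) ↔ StrictMono (g ∘ σ.symm) := by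
  refine ⟨fun h a b hab => ?_, fun h a b => ?_⟩
  · simpa [← h] using hab
  · simpa using (h.lt_iff_lt (a := σ a) (b := σ b)).symm

lemma Fin.strictMono_three_iff {α : Type*} [Preorder α] (g : Fin 3 → α) :
    StrictMono g ↔ g 0 < g 1 ∧ g 1 < g 2 := by
  rw [Fin.strictMono_iff_lt_succ, Fin.forall_fin_two]
  rfl

lemma containsPat_iff_strictMono (π : Equiv.Perm (Fin n)) (σ : Equiv.Perm (Fin k)) :
    ContainsPat π σ ↔ ∃ f : Fin k → Fin n, StrictMono f ∧ StrictMono (π ∘ f ∘ σ.symm) := by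
  simp only [ContainsPat, lt_iff_lt_iff_strictMono_comp_symm]
  rfl

lemma containsConsecPat_iff_strictMono (ρ : Equiv.Perm (Fin n)) (σ : Equiv.Perm (Fin k)) :
    ContainsConsecPat ρ σ ↔ ∃ (i : ℕ) (h : i + k ≤ n),
      StrictMono fun a : Fin k => ρ ⟨i + (σ.symm a : ℕ), by omega⟩ := by
  simp only [ContainsConsecPat, lt_iff_lt_iff_strictMono_comp_symm]
  rfl

lemma containsPat_three_iff (π : Equiv.Perm (Fin n)) (σ : Equiv.Perm (Fin 3)) :
    ContainsPat π σ ↔ ∃ i j k : Fin n, i < j ∧ j < k ∧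
      StrictMono (π ∘ ![i, j, k] ∘ σ.symm) := by
  rw [containsPat_iff_strictMono]
  constructor
  · rintro ⟨f, hf, hπf⟩
    refine ⟨f 0, f 1, f 2, hf (by decide), hf (by decide), ?_⟩
    convert hπf
    ext a
    fin_cases a <;> rfl
  · rintro ⟨i, j, k, hij, hjk, h⟩
    exact ⟨_, (Fin.strictMono_three_iff _).2 ⟨hij, hjk⟩, h⟩

lemma p213_symm_apply : p213.symm 0 = 1 ∧ p213.symm 1 = 0 ∧ p213.symm 2 = 2 := by decide

lemma p312_symm_apply : p312.symm 0 = 1 ∧ p312.symm 1 = 2 ∧ p312.symm 2 = 0 := by decide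

lemma containsPat_p213_iff (π : Equiv.Perm (Fin n)) :
    ContainsPat π p213 ↔ ∃ i j k, i < j ∧ j < k ∧ π j < π i ∧ π i < π k := by
  simp [containsPat_three_iff, Fin.strictMono_three_iff, p213_symm_apply]

lemma containsPat_p312_iff (π : Equiv.Perm (Fin n)) :
    ContainsPat π p312 ↔ ∃ i j k, i < j ∧ j < k ∧ π j < π k ∧ π k < π i := by
  simp [containsPat_three_iff, Fin.strictMono_three_iff, p312_symm_apply]

lemma containsConsecPat_p213_iff (ρ : Equiv.Perm (Fin n)) :
    ContainsConsecPat ρ p213 ↔ ∃ i j k : Fin n, (j : ℕ) = i + 1 ∧ (k : ℕ) = i + 2 ∧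
      ρ j < ρ i ∧ ρ i < ρ k := by
  simp only [containsConsecPat_iff_strictMono, Fin.strictMono_three_iff, p213_symm_apply]
  constructor
  · rintro ⟨i, h, h₁, h₂⟩
    exact ⟨⟨i, by omega⟩, ⟨i + 1, by omega⟩, ⟨i + 2, by omega⟩, rfl, rfl, h₁, h₂⟩
  · rintro ⟨⟨i, hi⟩, ⟨_, _⟩, ⟨_, hk⟩, rfl, rfl, h₁, h₂⟩
    exact ⟨i, Nat.succ_le_of_lt hk, h₁, h₂⟩

end Patterns

def HasValley {α β : Type*} [LT α] [LT β] (f : α → β) : Prop :=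
  ∃ i j k, i < j ∧ j < k ∧ f j < f i ∧ f j < f k

lemma avoidsPat_p213_and_avoidsPat_p312_iff {n : ℕ} (π : Equiv.Perm (Fin n)) :
    AvoidsPat π p213 ∧ AvoidsPat π p312 ↔ ¬HasValley π := by
  rw [AvoidsPat, AvoidsPat, ← not_or, containsPat_p213_iff, containsPat_p312_iff]
  refine not_congr ⟨?_, fun ⟨i, j, k, hij, hjk, hji, hjk'⟩ => ?_⟩
  · rintro (⟨i, j, k, hij, hjk, h₁, h₂⟩ | ⟨i, j, k, hij, hjk, h₁, h₂⟩)
    · exact ⟨i, j, k, hij, hjk, h₁, h₁.trans h₂⟩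
    · exact ⟨i, j, k, hij, hjk, h₁.trans h₂, h₁⟩
  rcases lt_trichotomy (π i) (π k) with h | h | h
  · exact .inl ⟨i, j, k, hij, hjk, hji, h⟩
  · exact absurd (π.injective h) (hij.trans hjk).ne
  · exact .inr ⟨i, j, k, hij, hjk, hjk', h⟩

section Unimodal

variable {α β : Type*} [LinearOrder α] [LinearOrder β]

lemma strictMonoOn_Iic_of_not_hasValley [OrderTop β] {f : α → β} (hf : ¬HasValley f)
    (hinj : Injective f) {m : α} (hm : f m = ⊤) : StrictMonoOn f (Set.Iic m) := by
  intro i _ j hj hij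
  by_contra h
  have hji : f j < f i := (not_lt.1 h).lt_of_ne (hinj.ne hij.ne')
  rcases (Set.mem_Iic.1 hj).lt_or_eq with hjm | rfl
  · exact hf ⟨i, j, m, hij, hjm, hji, (le_top.trans_eq hm.symm).lt_of_ne (hinj.ne hjm.ne)⟩
  · exact not_top_lt (hm ▸ hji)

lemma strictAntiOn_Ici_of_not_hasValley [OrderTop β] {f : α → β} (hf : ¬HasValley f)
    (hinj : Injective f) {m : α} (hm : f m = ⊤) : StrictAntiOn f (Set.Ici m) := by
  intro i hi j _ hij
  by_contra h
  have hij' : f i < f j := (not_lt.1 h).lt_of_ne (hinj.ne hij.ne)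
  rcases (Set.mem_Ici.1 hi).lt_or_eq with hmi | rfl
  · exact hf ⟨m, i, j, hmi, hij, (le_top.trans_eq hm.symm).lt_of_ne (hinj.ne hmi.ne'), hij'⟩
  · exact not_top_lt (hm ▸ hij')

lemma lt_apply_middle_of_not_hasValley {f : α → α} (hf : ¬HasValley f) {p q r : α}
    (hpq : p < q) (hqr : q < r) (h₁ : f (f q) < f (f p)) (h₂ : f (f p) < f (f r)) :
    f p < f q ∧ f r < f q := by
  have hqp : f q ≠ f p := fun h => h₁.ne (by rw [h])
  have hqr' : f q ≠ f r := fun h => (h₁.trans h₂).ne (by rw [h])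
  rcases hqp.lt_or_gt with hqp | hqp <;> rcases hqr'.lt_or_gt with hqr' | hqr'
  · exact absurd ⟨p, q, r, hpq, hqr, hqp, hqr'⟩ hf
  · exact absurd ⟨f r, f q, f p, hqr', hqp, h₁.trans h₂, h₁⟩ hf
  · exact absurd ⟨f p, f q, f r, hqp, hqr', h₁, h₁.trans h₂⟩ hf
  · exact ⟨hqp, hqr'⟩

-- Sorting by this key lists the values outside `D` increasingly, then those of `D` decreasingly.
def unimodalKey (D : Finset α) (v : α) : α ⊕ₗ αᵒᵈ :=
  if v ∈ D then toLex (.inr (OrderDual.toDual v)) else toLex (.inl v)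

lemma unimodalKey_injective (D : Finset α) : Injective (unimodalKey D) := by
  intro v w h
  unfold unimodalKey at h
  split_ifs at h <;> simp_all

lemma not_hasValley_of_strictMono_unimodalKey {ι : Type*} [LinearOrder ι] {D : Finset α}
    {f : ι → α} (hf : StrictMono (unimodalKey D ∘ f)) : ¬HasValley f := by
  rintro ⟨i, j, k, hij, hjk, hji, hjk'⟩
  have h₁ := hf hij
  have h₂ := hf hjk
  simp only [comp, unimodalKey] at h₁ h₂
  split_ifs at h₁ h₂ <;> simp_all [lt_asymm]

variable [OrderTop α] [LocallyFiniteOrderTop α]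

def rightOfMax (π : Equiv.Perm α) : Finset α := (Finset.Ioi (π.symm ⊤)).map π.toEmbedding

lemma mem_rightOfMax {π : Equiv.Perm α} {v : α} : v ∈ rightOfMax π ↔ π.symm ⊤ < π.symm v := by
  simp [rightOfMax, Finset.mem_map_equiv]

lemma top_notMem_rightOfMax (π : Equiv.Perm α) : ⊤ ∉ rightOfMax π := by
  simp [mem_rightOfMax]

lemma strictMono_unimodalKey_rightOfMax {π : Equiv.Perm α} (hπ : ¬HasValley π) :
    StrictMono (unimodalKey (rightOfMax π) ∘ π) := by
  have hm : π (π.symm ⊤) = ⊤ := π.apply_symm_apply ⊤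
  intro i j hij
  simp only [comp, unimodalKey, mem_rightOfMax, Equiv.symm_apply_apply]
  split_ifs with hi hj hj
  · simpa using strictAntiOn_Ici_of_not_hasValley hπ π.injective hm hi.le (hi.trans hij).le hij
  · exact absurd (hi.trans hij) hj
  · exact Sum.Lex.inl_lt_inr _ _
  · simpa using strictMonoOn_Iic_of_not_hasValley hπ π.injective hm
      (not_lt.1 hi) (not_lt.1 hj) hij

lemma rightOfMax_eq_of_strictMono_unimodalKey {D : Finset α} {π : Equiv.Perm α}
    (hπ : StrictMono (unimodalKey D ∘ π)) (hD : ⊤ ∉ D) : rightOfMax π = D := by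
  ext v
  rw [mem_rightOfMax, ← hπ.lt_iff_lt]
  by_cases hv : v ∈ D <;> simp [unimodalKey, hD, hv]

end Unimodal

lemma Tuple.eq_sort_iff_strictMono {n : ℕ} {β : Type*} [LinearOrder β] {f : Fin n → β}
    (hf : Injective f) {σ : Equiv.Perm (Fin n)} : σ = Tuple.sort f ↔ StrictMono (f ∘ σ) := by
  rw [Tuple.eq_sort_iff]
  exact ⟨fun h => h.1.strictMono_of_injective (hf.comp σ.injective),
    fun h => ⟨h.monotone, fun i j hij hf' => absurd (σ.injective (hf hf')) hij.ne⟩⟩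

noncomputable def valleyFreeEquiv (n : ℕ) :
    {π : Equiv.Perm (Fin (n + 1)) // ¬HasValley π} ≃ {D : Finset (Fin (n + 1)) // ⊤ ∉ D} where
  toFun π := ⟨rightOfMax π.1, top_notMem_rightOfMax π.1⟩
  invFun D := ⟨Tuple.sort (unimodalKey D.1), not_hasValley_of_strictMono_unimodalKey
    ((Tuple.eq_sort_iff_strictMono (unimodalKey_injective _)).1 rfl)⟩
  left_inv π := Subtype.ext ((Tuple.eq_sort_iff_strictMono (unimodalKey_injective _)).2
    (strictMono_unimodalKey_rightOfMax π.2)).symm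
  right_inv D := Subtype.ext (rightOfMax_eq_of_strictMono_unimodalKey
    ((Tuple.eq_sort_iff_strictMono (unimodalKey_injective _)).1 rfl) D.2)

lemma Fin.val_add_sub_le_of_strictMonoOn {N M : ℕ} {f : Fin N → Fin M} {i j : Fin N}
    (hf : StrictMonoOn f (Set.Icc i j)) (hij : i ≤ j) : (f i : ℕ) + (j - i) ≤ f j := by
  have hi : i ∈ Set.Icc i j := ⟨le_rfl, hij⟩
  have hj : j ∈ Set.Icc i j := ⟨hij, le_rfl⟩
  have hsub : (Icc i j).image f ⊆ Icc (f i) (f j) := by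
    simp only [subset_iff, mem_image, mem_Icc]
    rintro _ ⟨x, hx, rfl⟩
    exact ⟨hf.monotoneOn hi hx hx.1, hf.monotoneOn hx hj hx.2⟩
  have hcard := card_le_card hsub
  rw [card_image_of_injOn (by simpa using hf.injOn), Fin.card_Icc, Fin.card_Icc] at hcard
  have := hf.monotoneOn hi hj hij
  rw [Fin.le_def] at hij this
  omega

section SquareConsecutive

variable {n : ℕ} {π : Equiv.Perm (Fin (n + 2))}

lemma Fin.le_castSucc_last_iff {v : Fin (n + 2)} : v ≤ (Fin.last n).castSucc ↔ v ≠ ⊤ := by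
  rw [Fin.le_castSucc_iff, Fin.succ_last, Fin.lt_last_iff_ne_last]
  rfl

lemma strictMonoOn_Iic_symm_top (hπ : ¬HasValley π) : StrictMonoOn π (Set.Iic (π.symm ⊤)) :=
  strictMonoOn_Iic_of_not_hasValley hπ π.injective (π.apply_symm_apply ⊤)

lemma strictAntiOn_Ici_symm_top (hπ : ¬HasValley π) : StrictAntiOn π (Set.Ici (π.symm ⊤)) :=
  strictAntiOn_Ici_of_not_hasValley hπ π.injective (π.apply_symm_apply ⊤)

lemma le_apply_of_le_symm_top (hπ : ¬HasValley π) {j : Fin (n + 2)} (hj : j ≤ π.symm ⊤) :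
    (j : ℕ) ≤ π j := by
  have := Fin.val_add_sub_le_of_strictMonoOn ((strictMonoOn_Iic_symm_top hπ).mono
    (Set.Icc_subset_Iic_self.trans (Set.Iic_subset_Iic.2 hj))) (Fin.zero_le j)
  rw [Fin.val_zero, Nat.sub_zero] at this
  omega

lemma apply_eq_self_of_le (hπ : ¬HasValley π) {a b : Fin (n + 2)} (ha : a ≤ π.symm ⊤)
    (hπa : π a = a) (hba : b ≤ a) : π b = b := by
  have h₁ := Fin.val_add_sub_le_of_strictMonoOn ((strictMonoOn_Iic_symm_top hπ).mono
    (Set.Icc_subset_Iic_self.trans (Set.Iic_subset_Iic.2 ha))) hba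
  have h₂ := le_apply_of_le_symm_top hπ (hba.trans ha)
  rw [hπa] at h₁
  rw [Fin.le_def] at hba
  ext
  omega

lemma eq_symm_top_of_lt_apply (hπ : ¬HasValley π) {p q r : Fin (n + 2)} (hq : (q : ℕ) = p + 1)
    (hr : (r : ℕ) = p + 2) (hpq : π p < π q) (hrq : π r < π q) : q = π.symm ⊤ := by
  rcases lt_trichotomy q (π.symm ⊤) with h | h | h
  · refine absurd (strictMonoOn_Iic_symm_top hπ h.le ?_ ?_) hrq.not_gt <;>
      simp only [Set.mem_Iic, Fin.le_def, Fin.lt_def] at h ⊢ <;> omega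
  · exact h
  · refine absurd (strictAntiOn_Ici_symm_top hπ ?_ h.le ?_) hpq.not_gt <;>
      simp only [Set.mem_Ici, Fin.le_def, Fin.lt_def] at h ⊢ <;> omega

lemma apply_eq_castSucc_last_of_lt (hπ : ¬HasValley π)
    (hS : π.symm (Fin.last n).castSucc < π.symm ⊤) {q : Fin (n + 2)}
    (hq : (q : ℕ) + 1 = π.symm ⊤) : π q = (Fin.last n).castSucc := by
  have hSq : π.symm (Fin.last n).castSucc ≤ q := Fin.le_def.2 (by rw [Fin.lt_def] at hS; omega)
  have hqm : q ≤ π.symm ⊤ := Fin.le_def.2 (by omega)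
  refine le_antisymm (Fin.le_castSucc_last_iff.2 fun h => ?_) ?_
  · exact (Fin.ne_of_val_ne (by omega) : q ≠ π.symm ⊤) (π.eq_symm_apply.2 h)
  · simpa using (strictMonoOn_Iic_symm_top hπ).monotoneOn (hSq.trans hqm) hqm hSq

lemma apply_eq_castSucc_last_of_gt (hπ : ¬HasValley π)
    (hS : π.symm ⊤ < π.symm (Fin.last n).castSucc) {q : Fin (n + 2)}
    (hq : (q : ℕ) = π.symm ⊤ + 1) : π q = (Fin.last n).castSucc := by
  have hqS : q ≤ π.symm (Fin.last n).castSucc := Fin.le_def.2 (by rw [Fin.lt_def] at hS; omega)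
  have hmq : π.symm ⊤ ≤ q := Fin.le_def.2 (by omega)
  refine le_antisymm (Fin.le_castSucc_last_iff.2 fun h => ?_) ?_
  · exact (Fin.ne_of_val_ne (by omega) : q ≠ π.symm ⊤) (π.eq_symm_apply.2 h)
  · simpa using (strictAntiOn_Ici_symm_top hπ).antitoneOn hmq (hmq.trans hqS) hqS

lemma apply_castSucc_last_lt_apply_apply (hπ : ¬HasValley π) {k : Fin (n + 2)}
    (hmk : π.symm ⊤ < k) (hkS : k ≤ (Fin.last n).castSucc) (hk : π k ≠ (Fin.last n).castSucc) :
    π (Fin.last n).castSucc < π (π k) := by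
  have hlt : π k < (Fin.last n).castSucc :=
    (Fin.le_castSucc_last_iff.2 fun h => hmk.ne' (π.eq_symm_apply.2 h)).lt_of_ne hk
  rcases le_or_gt (π.symm ⊤) (π k) with hmq | hqm
  · exact strictAntiOn_Ici_symm_top hπ hmq (hmq.trans hlt.le) hlt
  · have hSk := (strictAntiOn_Ici_symm_top hπ).antitoneOn hmk.le (hmk.le.trans hkS) hkS
    exact (hSk.trans (Fin.le_def.2 (le_apply_of_le_symm_top hπ hqm.le))).lt_of_ne
      fun h => hk (π.injective h).symm

lemma containsConsecPat_sq_p213_of_lt (hπ : ¬HasValley π)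
    (hS : π.symm (Fin.last n).castSucc < π.symm ⊤) (hm : (π.symm ⊤ : ℕ) < n) :
    ContainsConsecPat (π ^ 2) p213 := by
  have hm₁ : 1 ≤ (π.symm ⊤ : ℕ) := by rw [Fin.lt_def] at hS; omega
  set k : Fin (n + 2) := ⟨π.symm ⊤ + 1, by omega⟩
  have hmk : π.symm ⊤ < k := Fin.lt_def.2 (by simp [k])
  have hSm : π.symm ⊤ < (Fin.last n).castSucc := Fin.lt_def.2 (by simpa)
  rw [containsConsecPat_p213_iff]
  refine ⟨⟨π.symm ⊤ - 1, by omega⟩, π.symm ⊤, k, by simp; omega, by simp [k]; omega, ?_⟩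
  simp only [sq, Equiv.Perm.mul_apply, Equiv.apply_symm_apply,
    apply_eq_castSucc_last_of_lt hπ hS (q := ⟨π.symm ⊤ - 1, _⟩) (by simp; omega)]
  exact ⟨strictAntiOn_Ici_symm_top hπ hSm.le (Fin.le_last _) (Fin.castSucc_lt_last _),
    apply_castSucc_last_lt_apply_apply hπ hmk (Fin.le_def.2 (by simp [k]; omega))
      fun h => (hS.trans hmk).ne' (π.eq_symm_apply.2 h)⟩

lemma apply_apply_notMem_Ioo (hπ : ¬HasValley π)
    (hS : π.symm ⊤ < π.symm (Fin.last n).castSucc) {i : Fin (n + 2)}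
    (hi : (i : ℕ) + 1 = π.symm ⊤) : π (π i) ∉ Set.Ioo (π ⊤) (π (Fin.last n).castSucc) := by
  rintro ⟨h₁, h₂⟩
  have him : i < π.symm ⊤ := Fin.lt_def.2 (by omega)
  have hlt : π i < (Fin.last n).castSucc :=
    (Fin.le_castSucc_last_iff.2 fun h => him.ne (π.eq_symm_apply.2 h)).lt_of_ne
      fun h => (him.trans hS).ne (π.eq_symm_apply.2 h)
  rcases le_or_gt (π.symm ⊤) (π i) with hmi | hπim
  · exact h₂.not_gt (strictAntiOn_Ici_symm_top hπ hmi (hmi.trans hlt.le) hlt)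
  -- `π` increases from position `0` and fixes `i`, so it fixes every position `≤ i`, also `π ⊤`.
  · have hπi : π i = i := by
      have := le_apply_of_le_symm_top hπ him.le
      rw [Fin.lt_def] at hπim
      ext
      omega
    rw [hπi, hπi] at h₁
    have := π.injective (apply_eq_self_of_le hπ him.le hπi h₁.le)
    exact not_top_lt (this ▸ h₁)

lemma lt_of_containsConsecPat_sq_p213 (hπ : ¬HasValley π) (h : ContainsConsecPat (π ^ 2) p213) :
    π.symm (Fin.last n).castSucc < π.symm ⊤ ∧ (π.symm ⊤ : ℕ) < n := by
  obtain ⟨i, j, k, hj, hk, h₁, h₂⟩ := (containsConsecPat_p213_iff _).1 h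
  simp only [sq, Equiv.Perm.mul_apply] at h₁ h₂
  obtain ⟨hij, hkj⟩ := lt_apply_middle_of_not_hasValley hπ (Fin.lt_def.2 (by omega))
    (Fin.lt_def.2 (by omega)) h₁ h₂
  obtain rfl : j = π.symm ⊤ := eq_symm_top_of_lt_apply hπ hj hk hij hkj
  rw [Equiv.apply_symm_apply] at h₁
  rcases (π.symm.injective.ne (Fin.castSucc_lt_last _).ne).lt_or_gt with hS | hS
  · refine ⟨hS, ?_⟩
    by_contra hmn
    have hSm : (Fin.last n).castSucc = π.symm ⊤ := Fin.ext (by simp; omega)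
    rw [apply_eq_castSucc_last_of_lt hπ hS (q := i) (by omega), hSm, Equiv.apply_symm_apply] at h₂
    exact not_top_lt h₂
  · rw [apply_eq_castSucc_last_of_gt hπ hS (q := k) (by omega)] at h₂
    exact absurd ⟨h₁, h₂⟩ (apply_apply_notMem_Ioo hπ hS (by omega))

lemma avoidsConsecPat_sq_p213_iff (hπ : ¬HasValley π) :
    AvoidsConsecPat (π ^ 2) p213 ↔
      (Fin.last n).castSucc ∈ rightOfMax π ∨ #(rightOfMax π) ≤ 1 := by
  have hcontains : ContainsConsecPat (π ^ 2) p213 ↔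
      π.symm (Fin.last n).castSucc < π.symm ⊤ ∧ (π.symm ⊤ : ℕ) < n :=
    ⟨lt_of_containsConsecPat_sq_p213 hπ, fun h => containsConsecPat_sq_p213_of_lt hπ h.1 h.2⟩
  have hSm : π.symm (Fin.last n).castSucc ≠ π.symm ⊤ := by simp [Fin.ext_iff]
  rw [AvoidsConsecPat, hcontains, mem_rightOfMax, rightOfMax, card_map, Fin.card_Ioi]
  rw [ne_eq, Fin.ext_iff] at hSm
  rw [Fin.lt_def, Fin.lt_def]
  omega

end SquareConsecutive

lemma card_subtype_not_hasValley (n : ℕ) (Q : Finset (Fin (n + 1)) → Prop) :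
    Nat.card {π : Equiv.Perm (Fin (n + 1)) // ¬HasValley π ∧ Q (rightOfMax π)} =
      Nat.card {D : Finset (Fin (n + 1)) // ⊤ ∉ D ∧ Q D} :=
  Nat.card_congr <| (Equiv.subtypeSubtypeEquivSubtypeInter _ _).symm.trans <|
    ((valleyFreeEquiv n).subtypeEquiv fun _ => Iff.rfl).trans
      (Equiv.subtypeSubtypeEquivSubtypeInter _ _)

lemma Finset.card_filter_mem_or_card_le_one {α : Type*} [DecidableEq α] {U : Finset α} {a : α}
    (ha : a ∈ U) : #{D ∈ U.powerset | a ∈ D ∨ #D ≤ 1} = 2 ^ (#U - 1) + #U := by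
  set singletons := insert ∅ ((U.erase a).map ⟨singleton, singleton_injective⟩)
  have hsplit : {D ∈ U.powerset | a ∈ D ∨ #D ≤ 1} = Icc {a} U ∪ singletons := by
    ext D
    simp only [singletons, mem_filter, mem_powerset, mem_union, mem_Icc, singleton_subset_iff,
      mem_insert, mem_map, mem_erase, Embedding.coeFn_mk]
    constructor
    · rintro ⟨hDU, hD⟩
      by_cases haD : a ∈ D
      · exact .inl ⟨haD, hDU⟩
      rcases Nat.le_one_iff_eq_zero_or_eq_one.1 (hD.resolve_left haD) with h | h
      · exact .inr (.inl (card_eq_zero.1 h))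
      · obtain ⟨v, rfl⟩ := card_eq_one.1 h
        exact .inr (.inr ⟨v, ⟨by simpa [eq_comm] using haD, hDU (mem_singleton_self v)⟩, rfl⟩)
    · rintro (⟨haD, hDU⟩ | rfl | ⟨v, ⟨hva, hvU⟩, rfl⟩)
      · exact ⟨hDU, .inl haD⟩
      · simp
      · simpa using hvU
  have hdisj : Disjoint (Icc {a} U) singletons := by
    rw [disjoint_left]
    simp only [singletons, mem_Icc, singleton_subset_iff, mem_insert, mem_map, mem_erase]
    rintro D ⟨haD, -⟩ (rfl | ⟨v, ⟨hva, -⟩, rfl⟩)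
    · simp at haD
    · exact hva (mem_singleton.1 haD).symm
  rw [hsplit, card_union_of_disjoint hdisj, card_Icc_finset (by simpa using ha),
    card_insert_of_notMem (by simp), card_map, card_erase_of_mem ha, card_singleton]
  have := card_pos.2 ⟨a, ha⟩
  omega

lemma card_subtype_castSucc_last_mem_or_card_le_one (n : ℕ) :
    Nat.card {D : Finset (Fin (n + 2)) // ⊤ ∉ D ∧ ((Fin.last n).castSucc ∈ D ∨ #D ≤ 1)} =
      2 ^ n + (n + 1) := by
  have hfilter : ({D | ⊤ ∉ D ∧ ((Fin.last n).castSucc ∈ D ∨ #D ≤ 1)} : Finset (Finset _)) =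
      {D ∈ (univ.erase (⊤ : Fin (n + 2))).powerset | (Fin.last n).castSucc ∈ D ∨ #D ≤ 1} := by
    ext D
    simp [subset_erase]
  rw [Nat.card_eq_fintype_card, Fintype.card_subtype, hfilter,
    card_filter_mem_or_card_le_one (by simp [Fin.ext_iff])]
  simp

theorem stmt1 (n : ℕ) (hn : 2 ≤ n) :
    Nat.card {π : Equiv.Perm (Fin n) //
        AvoidsPat π p213 ∧ AvoidsPat π p312 ∧ AvoidsConsecPat (π ^ 2) p213} =
      2 ^ (n - 2) + n - 1 := by
  obtain ⟨n, rfl⟩ := Nat.exists_eq_add_of_le' hn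
  have hchar (π : Equiv.Perm (Fin (n + 2))) :
      AvoidsPat π p213 ∧ AvoidsPat π p312 ∧ AvoidsConsecPat (π ^ 2) p213 ↔
        ¬HasValley π ∧ ((Fin.last n).castSucc ∈ rightOfMax π ∨ #(rightOfMax π) ≤ 1) := by
    rw [← and_assoc, avoidsPat_p213_and_avoidsPat_p312_iff]
    exact and_congr_right avoidsConsecPat_sq_p213_iff
  rw [Nat.card_congr (Equiv.subtypeEquivRight hchar),
    card_subtype_not_hasValley (n + 1) fun D => (Fin.last n).castSucc ∈ D ∨ #D ≤ 1,
    card_subtype_castSucc_last_mem_or_card_le_one, Nat.add_sub_cancel]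
  rfl
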